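/- For ε ∈ (0, 1/2], the inverse standard Gaussian CDF satisfies |Φ^{-1}(ε)| ≤ 2·√(log₂(1/(2ε))). -/

import Mathlib

/-!
The density `φ` of the standard normal law is even, so `Φ(0) = 1/2` and `Φ(-a) = ∫_a^∞ φ`.
For `t ≥ a ≥ 0` we have `φ(t) ≤ e^{-a²/2} φ(t - a)`, whence `Φ(-a) ≤ e^{-a²/2}/2`. With
`a = 2√L`, `L = log₂(1/(2ε))`, this gives `Φ(-a) ≤ e^{-2L}/2 ≤ 2^{-L}/2 = ε = Φ(x)`, and since
`Φ` is strictly increasing, `-a ≤ x ≤ 0`.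
-/

/-- The standard normal CDF `Φ(x) = ∫_{-∞}^x e^{-t²/2}/√(2π) dt`. -/
noncomputable def gaussCDF (x : ℝ) : ℝ :=
  ∫ t in Set.Iic x, Real.exp (-t ^ 2 / 2) / Real.sqrt (2 * Real.pi)

open MeasureTheory ProbabilityTheory Real Set

section IntegralIic

variable {f : ℝ → ℝ}

theorem strictMono_integral_Iic_of_pos (hf : Integrable f) (hpos : ∀ t, 0 < f t) :
    StrictMono fun x ↦ ∫ t in Iic x, f t := by
  intro a b hab
  have hpos := intervalIntegral.intervalIntegral_pos_of_pos hf.intervalIntegrable hpos hab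
  rw [← intervalIntegral.integral_Iic_sub_Iic hf.integrableOn hf.integrableOn] at hpos
  exact sub_pos.mp hpos

theorem integral_Iic_neg_eq_integral_Ioi_of_even (heven : ∀ t, f (-t) = f t) (a : ℝ) :
    ∫ t in Iic (-a), f t = ∫ t in Ioi a, f t := by
  simp_rw [← integral_comp_neg_Ioi, heven]

theorem integral_Ioi_zero_eq_half_of_even (heven : ∀ t, f (-t) = f t) :
    ∫ t in Ioi 0, f t = (∫ t, f t) / 2 := by
  have habs : ∀ t, f |t| = f t := fun t ↦ by
    rcases abs_choice t with h | h <;> rw [h]; exact heven t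
  have h := integral_comp_abs (f := f)
  simp only [habs] at h
  linarith

theorem integral_Ioi_comp_sub_self (f : ℝ → ℝ) (a : ℝ) :
    ∫ t in Ioi a, f (t - a) = ∫ t in Ioi 0, f t := by
  have := (measurePreserving_add_right volume a).setIntegral_preimage_emb
    (MeasurableEquiv.addRight a).measurableEmbedding (fun t ↦ f (t - a)) (Ioi a)
  simpa [preimage_add_const_Ioi] using this.symm

end IntegralIic

theorem gaussianPDFReal_zero_neg (v : NNReal) (t : ℝ) :
    gaussianPDFReal 0 v (-t) = gaussianPDFReal 0 v t := by
  simp [gaussianPDFReal]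

/-- The shift trick: `t² ≥ a² + (t - a)²` when `0 ≤ a ≤ t`. -/
theorem gaussianPDFReal_le_exp_mul_sub {a t : ℝ} (ha : 0 ≤ a) (hat : a ≤ t) :
    gaussianPDFReal 0 1 t ≤ exp (-a ^ 2 / 2) * gaussianPDFReal 0 1 (t - a) := by
  simp only [gaussianPDFReal, sub_zero, NNReal.coe_one, mul_one]
  rw [mul_left_comm, ← exp_add]
  gcongr
  nlinarith

theorem integral_Ioi_gaussianPDFReal_le {a : ℝ} (ha : 0 ≤ a) :
    ∫ t in Ioi a, gaussianPDFReal 0 1 t ≤ exp (-a ^ 2 / 2) / 2 := by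
  have hhalf : ∫ t in Ioi 0, gaussianPDFReal 0 1 t = 1 / 2 := by
    rw [integral_Ioi_zero_eq_half_of_even (gaussianPDFReal_zero_neg 1),
      integral_gaussianPDFReal_eq_one 0 one_ne_zero]
  calc ∫ t in Ioi a, gaussianPDFReal 0 1 t
      ≤ ∫ t in Ioi a, exp (-a ^ 2 / 2) * gaussianPDFReal 0 1 (t - a) :=
        setIntegral_mono_on (integrable_gaussianPDFReal 0 1).integrableOn
          (((integrable_gaussianPDFReal 0 1).comp_sub_right a).const_mul _).integrableOn
          measurableSet_Ioi fun t ht ↦ gaussianPDFReal_le_exp_mul_sub ha (le_of_lt ht)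
    _ = exp (-a ^ 2 / 2) / 2 := by
        rw [integral_const_mul, integral_Ioi_comp_sub_self (gaussianPDFReal 0 1), hhalf]
        ring

theorem gaussCDF_eq_integral_gaussianPDFReal (x : ℝ) :
    gaussCDF x = ∫ t in Iic x, gaussianPDFReal 0 1 t := by
  simp [gaussCDF, gaussianPDFReal, div_eq_inv_mul]

theorem gaussCDF_strictMono : StrictMono gaussCDF := by
  simpa only [← funext gaussCDF_eq_integral_gaussianPDFReal] using
    strictMono_integral_Iic_of_pos (integrable_gaussianPDFReal 0 1)
      fun t ↦ gaussianPDFReal_pos 0 1 t one_ne_zero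

theorem gaussCDF_zero : gaussCDF 0 = 1 / 2 := by
  have hsymm := integral_Iic_neg_eq_integral_Ioi_of_even (gaussianPDFReal_zero_neg 1) 0
  rw [neg_zero] at hsymm
  rw [gaussCDF_eq_integral_gaussianPDFReal, hsymm,
    integral_Ioi_zero_eq_half_of_even (gaussianPDFReal_zero_neg 1),
    integral_gaussianPDFReal_eq_one 0 one_ne_zero]

theorem gaussCDF_neg_le {a : ℝ} (ha : 0 ≤ a) : gaussCDF (-a) ≤ exp (-a ^ 2 / 2) / 2 := by
  rw [gaussCDF_eq_integral_gaussianPDFReal,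
    integral_Iic_neg_eq_integral_Ioi_of_even (gaussianPDFReal_zero_neg 1)]
  exact integral_Ioi_gaussianPDFReal_le ha

theorem exp_neg_two_mul_logb_one_div_le {δ : ℝ} (hδ : 0 < δ) (hδ1 : δ ≤ 1) :
    exp (-(2 * logb 2 (1 / δ))) ≤ δ := by
  have hlog2 : 0 < log 2 := log_pos one_lt_two
  have hlog2_le : log 2 ≤ 2 := by linarith [log_two_lt_d9]
  have hlogδ : log δ ≤ 0 := log_nonpos hδ.le hδ1
  calc exp (-(2 * logb 2 (1 / δ))) = exp (2 / log 2 * log δ) := by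
        rw [logb, one_div, log_inv]; ring_nf
    _ ≤ exp (log δ) := by
        gcongr
        have : 1 ≤ 2 / log 2 := by rw [le_div_iff₀ hlog2]; linarith
        nlinarith
    _ = δ := exp_log hδ

/-- For `ε ∈ (0, 1/2]`, any `x` with `Φ(x) = ε` (i.e. `x = Φ⁻¹(ε)`) satisfies
`|Φ⁻¹(ε)| ≤ 2·√(log₂(1/(2ε)))`. -/
theorem abs_gaussCDF_inv_le (ε x : ℝ) (hε : 0 < ε) (hε' : ε ≤ 1 / 2)
    (hx : gaussCDF x = ε) :
    |x| ≤ 2 * Real.sqrt (Real.logb 2 (1 / (2 * ε))) := by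
  set L := logb 2 (1 / (2 * ε))
  have h2ε : 0 < 2 * ε := by positivity
  have hL : 0 ≤ L := logb_nonneg one_lt_two (by rw [le_div_iff₀ h2ε]; linarith)
  have hx_nonpos : x ≤ 0 :=
    gaussCDF_strictMono.le_iff_le.mp (by rw [hx, gaussCDF_zero]; exact hε')
  have hx_ge : -(2 * √L) ≤ x := gaussCDF_strictMono.le_iff_le.mp <|
    calc gaussCDF (-(2 * √L)) ≤ exp (-(2 * √L) ^ 2 / 2) / 2 := gaussCDF_neg_le (by positivity)
      _ = exp (-(2 * L)) / 2 := by rw [mul_pow, sq_sqrt hL]; ring_nf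
      _ ≤ 2 * ε / 2 := by gcongr; exact exp_neg_two_mul_logb_one_div_le h2ε (by linarith)
      _ = gaussCDF x := by rw [hx]; ring
  rw [abs_le]
  constructor <;> linarith [sqrt_nonneg L]
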